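/- arXiv:2411.19413 — 6 statements merged into one kernel-verified Lean document; each statement's English description precedes it below -/
import Mathlib

section
/- Let q ≠ 2 and let A ⊆ F_q^n be an S_h-linear set with h ≥ 2. Then for every integer t with 1 ≤ t ≤ h-1, no value of a t-linear combination of A equals a value of an h-linear combination of A; that is, h̄A ∩ t̄A = ∅. -/
/-- `A` is an `S_h`-linear set: all `h`-linear combinations of distinct elements of `A`
with nonzero coefficients yield distinct values, up to reordering of summands. -/
def IsShLinearSet (F : Type*) [Field F] {V : Type*} [AddCommGroup V] [Module F V]
    (A : Set V) (h : ℕ) : Prop :=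
  ∀ (a b : Fin h → V) (l m : Fin h → F),
    Function.Injective a → Function.Injective b →
    (∀ i, a i ∈ A) → (∀ i, b i ∈ A) →
    (∀ i, l i ≠ 0) → (∀ i, m i ≠ 0) →
    (∑ i, l i • a i) = (∑ i, m i • b i) →
    ∃ σ : Equiv.Perm (Fin h), (∀ i, b (σ i) = a i) ∧ (∀ i, m (σ i) = l i)

/-- The set of values of all `h`-linear combinations of `A`. -/
def hLinComb (F : Type*) [Field F] {V : Type*} [AddCommGroup V] [Module F V]
    (A : Set V) (h : ℕ) : Set V :=
  {v | ∃ (a : Fin h → V) (l : Fin h → F),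
    Function.Injective a ∧ (∀ i, a i ∈ A) ∧ (∀ i, l i ≠ 0) ∧ v = ∑ i, l i • a i}

/-- `S` is an `S_h`-set: all sums of `h` distinct elements of `S` are pairwise distinct. -/
def IsShSet {G : Type*} [AddCommGroup G] (S : Set G) (h : ℕ) : Prop :=
  ∀ (a b : Fin h → G), Function.Injective a → Function.Injective b →
    (∀ i, a i ∈ S) → (∀ i, b i ∈ S) →
    (∑ i, a i) = (∑ i, b i) → Set.range a = Set.range b

/-! Encode a linear combination by its coefficient function `f : V →₀ F`. Suppose `f` (support of
size `h`) and `g` (support of size `t < h`) have the same value. Pick `c ∉ {0, -1}`, possible since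
`q ≠ 2`, and a set `S` of `h - t` points of `supp f \ supp g`. Adding `c • f|_S` to both keeps the
support of `f` (as `1 + c ≠ 0`) and enlarges that of `g` to the disjoint union `supp g ∪ S`, of
size `h`. The `S_h` property, read as injectivity of the linear-combination map on coefficient
functions with `h`-element support in `A`, then forces `f = g`, contradicting `t < h`. -/

open Finset Finsupp

theorem Finsupp.sum_eq_sum_fin {α M N : Type*} [Zero M] [AddCommMonoid N] (f : α →₀ M) {h : ℕ}
    (hf : #f.support = h) (φ : α → M → N) :
    f.sum φ = ∑ i, φ ((f.support.equivFinOfCardEq hf).symm i)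
      (f ((f.support.equivFinOfCardEq hf).symm i)) := by
  rw [Finsupp.sum, ← Finset.sum_coe_sort]
  exact ((f.support.equivFinOfCardEq hf).symm.sum_comp fun x => φ x (f x)).symm

theorem exists_ne_zero_and_one_add_ne_zero_of_card_ne_two {R : Type*} [Ring R] [Nontrivial R]
    [Fintype R] (hR : Fintype.card R ≠ 2) : ∃ c : R, c ≠ 0 ∧ 1 + c ≠ 0 := by
  classical
  have hcard : #({0, -1} : Finset R) < #(univ : Finset R) := by
    have := Fintype.one_lt_card (α := R)
    have := card_le_two (a := (0 : R)) (b := -1)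
    rw [card_univ]
    omega
  obtain ⟨c, -, hc⟩ := exists_mem_notMem_of_card_lt_card hcard
  simp only [mem_insert, mem_singleton, not_or] at hc
  exact ⟨c, hc.1, fun h => hc.2 (eq_neg_of_add_eq_zero_right h)⟩

section LinearCombinations

variable {F V : Type*} [Field F] [AddCommGroup V] [Module F V] {A : Set V} {h : ℕ}

theorem exists_finsupp_of_mem_hLinComb {v : V} (hv : v ∈ hLinComb F A h) :
    ∃ f : V →₀ F, ↑f.support ⊆ A ∧ #f.support = h ∧ linearCombination F id f = v := by
  classical
  obtain ⟨a, l, ha, haA, hl, rfl⟩ := hv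
  have hsupp : (equivFunOnFinite.symm l).support = univ := by
    ext i; simp [hl i]
  refine ⟨embDomain ⟨a, ha⟩ (equivFunOnFinite.symm l), ?_, ?_, ?_⟩
  · intro x hx
    rw [Finset.mem_coe, support_embDomain, hsupp, mem_map] at hx
    obtain ⟨i, -, rfl⟩ := hx
    exact haA i
  · rw [support_embDomain, hsupp, card_map, card_univ, Fintype.card_fin]
  · rw [linearCombination_embDomain, linearCombination_apply]
    simp [sum_fintype]

theorem linearCombination_eq_sum_fin (f : V →₀ F) (hf : #f.support = h) :
    linearCombination F id f = ∑ i, f ((f.support.equivFinOfCardEq hf).symm i) •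
      ((f.support.equivFinOfCardEq hf).symm i : V) := by
  rw [linearCombination_apply, sum_eq_sum_fin f hf]
  rfl

theorem IsShLinearSet.injOn_linearCombination (hA : IsShLinearSet F A h) :
    Set.InjOn (linearCombination F id) {f : V →₀ F | ↑f.support ⊆ A ∧ #f.support = h} := by
  rintro f ⟨hfA, hf⟩ g ⟨hgA, hg⟩ hfg
  set a : Fin h → V := fun i => (f.support.equivFinOfCardEq hf).symm i
  set b : Fin h → V := fun i => (g.support.equivFinOfCardEq hg).symm i
  have hf_eq : f = ∑ i, single (a i) (f (a i)) := by
    rw [← sum_eq_sum_fin f hf single, sum_single]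
  have hg_eq : g = ∑ i, single (b i) (g (b i)) := by
    rw [← sum_eq_sum_fin g hg single, sum_single]
  obtain ⟨σ, hσb, hσm⟩ := hA a b (f ∘ a) (g ∘ b)
    (Subtype.val_injective.comp (Equiv.injective _))
    (Subtype.val_injective.comp (Equiv.injective _))
    (fun _ => hfA (Subtype.prop _)) (fun _ => hgA (Subtype.prop _))
    (fun _ => mem_support_iff.mp (Subtype.prop _)) (fun _ => mem_support_iff.mp (Subtype.prop _))
    ((linearCombination_eq_sum_fin f hf).symm.trans
      (hfg.trans (linearCombination_eq_sum_fin g hg)))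
  rw [hf_eq, hg_eq, ← Equiv.sum_comp σ fun j => single (b j) (g (b j))]
  exact sum_congr rfl fun i _ => congr_arg₂ single (hσb i).symm (hσm i).symm

theorem eq_of_linearCombination_eq_of_injOn
    (hinj : Set.InjOn (linearCombination F id) {f : V →₀ F | ↑f.support ⊆ A ∧ #f.support = h})
    {c : F} (hc : c ≠ 0) (hc' : 1 + c ≠ 0) {f g : V →₀ F}
    (hfA : ↑f.support ⊆ A) (hgA : ↑g.support ⊆ A) (hf : #f.support = h) (hg : #g.support ≤ h)
    (hfg : linearCombination F id f = linearCombination F id g) : f = g := by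
  classical
  obtain ⟨S, hS, hScard⟩ : ∃ S ⊆ f.support \ g.support, #S = h - #g.support :=
    exists_subset_card_eq (hf ▸ le_card_sdiff g.support f.support)
  have hSf : S ⊆ f.support := hS.trans sdiff_subset
  have hSg : Disjoint g.support S := disjoint_of_subset_right hS disjoint_sdiff
  set d : V →₀ F := c • f.filter (· ∈ S)
  have hd : d.support = S := by
    rw [support_smul_eq hc, support_filter, filter_mem_eq_inter, inter_eq_right.mpr hSf]
  have hfd : (f + d).support = f.support := by
    ext x
    by_cases hx : x ∈ S
    · simp [d, hx, ← one_add_mul, hc']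
    · simp [d, hx]
  have hgd : (g + d).support = g.support ∪ S := by
    rw [support_add_eq (hd ▸ hSg), hd]
  have key : f + d = g + d := by
    refine hinj ⟨?_, ?_⟩ ⟨?_, ?_⟩ (by simp only [map_add, hfg])
    · rwa [hfd]
    · rwa [hfd]
    · rw [hgd, coe_union]
      exact Set.union_subset hgA ((coe_subset.mpr hSf).trans hfA)
    · rw [hgd, card_union_of_disjoint hSg, hScard]
      omega
  exact add_right_cancel key

end LinearCombinations

theorem stmt_3_general {F : Type*} [Field F] [Fintype F] {n : ℕ} (A : Set (Fin n → F)) (h t : ℕ)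
    (hq : Fintype.card F ≠ 2) (hh : 2 ≤ h) (hA : IsShLinearSet F A h)
    (ht2 : t ≤ h - 1) :
    hLinComb F A h ∩ hLinComb F A t = ∅ := by
  refine Set.eq_empty_iff_forall_notMem.mpr fun v ⟨hvh, hvt⟩ => ?_
  obtain ⟨f, hfA, hf, rfl⟩ := exists_finsupp_of_mem_hLinComb hvh
  obtain ⟨g, hgA, hg, hfg⟩ := exists_finsupp_of_mem_hLinComb hvt
  obtain ⟨c, hc, hc'⟩ := exists_ne_zero_and_one_add_ne_zero_of_card_ne_two hq
  obtain rfl : f = g := eq_of_linearCombination_eq_of_injOn hA.injOn_linearCombination hc hc'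
    hfA hgA hf (by omega) hfg.symm
  omega

theorem stmt_3 {F : Type*} [Field F] [Fintype F] {n : ℕ} (A : Set (Fin n → F)) (h t : ℕ)
    (hq : Fintype.card F ≠ 2) (hh : 2 ≤ h) (hA : IsShLinearSet F A h)
    (ht1 : 1 ≤ t) (ht2 : t ≤ h - 1) :
    hLinComb F A h ∩ hLinComb F A t = ∅ :=
  stmt_3_general A h t hq hh hA ht2
end

section
/- Let A be an S_h-linear set in a finite vector space V of dimension r over F_q, where 2h < r ≤ |A|. Then A is an S_j-linear set for every j with 1 ≤ j ≤ h-1. -/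
/-! Two equal `j`-linear combinations, padded by the same `h - j` further elements of `A` with
coefficient `1`, become equal `h`-linear combinations. The matching permutation given by the
`S_h` property must send the original terms to original terms, since the padding avoids them. -/

open Set Function

theorem Set.exists_injective_fin_mem_of_le_encard {α : Type*} {S : Set α} {k : ℕ}
    (hk : (k : ℕ∞) ≤ S.encard) : ∃ c : Fin k → α, Injective c ∧ ∀ i, c i ∈ S := by
  obtain ⟨t, hts, htk⟩ := exists_subset_encard_eq hk
  have ht : t.Finite := finite_of_encard_eq_coe htk
  have hcard : ht.toFinset.card = k := by
    rw [ht.encard_eq_coe_toFinset_card] at htk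
    exact_mod_cast htk
  let e := (ht.toFinset.equivFinOfCardEq hcard).symm
  exact ⟨fun i ↦ e i, Subtype.val_injective.comp e.injective,
    fun i ↦ hts (ht.mem_toFinset.mp (e i).2)⟩

theorem Set.encard_range_le {ι α : Type*} (f : ι → α) :
    (range f).encard ≤ ENat.card ι := by
  simpa [← image_univ] using encard_image_le f univ

theorem Set.le_encard_sdiff_range_union {α : Type*} {A : Set α} {j k : ℕ} (a b : Fin j → α)
    (hA : (k + j + j : ℕ∞) ≤ A.encard) :
    (k : ℕ∞) ≤ (A \ (range a ∪ range b)).encard := by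
  have hR : (range a ∪ range b).encard ≤ j + j :=
    (encard_union_le _ _).trans <| by
      simpa using add_le_add (encard_range_le a) (encard_range_le b)
  have hsplit := hA.trans ((encard_le_encard_sdiff_add_encard A _).trans (add_le_add_right hR _))
  rw [add_assoc] at hsplit
  exact (ENat.add_le_add_iff_right (by simp)).mp hsplit

theorem Equiv.Perm.exists_restrict_castAdd {j k : ℕ} (σ : Perm (Fin (j + k)))
    (hσ : ∀ i, σ (Fin.castAdd k i) ∈ range (Fin.castAdd k)) :
    ∃ τ : Perm (Fin j), ∀ i, σ (Fin.castAdd k i) = Fin.castAdd k (τ i) := by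
  choose τ hτ using hσ
  have hinj : Injective τ := fun i i' h ↦
    Fin.castAdd_injective _ _ (σ.injective (by rw [← hτ, ← hτ, h]))
  exact ⟨Equiv.ofBijective τ (Finite.injective_iff_bijective.mp hinj), fun i ↦ (hτ i).symm⟩

theorem IsShLinearSet.of_add {F V : Type*} [Field F] [AddCommGroup V] [Module F V] {A : Set V}
    {j k : ℕ} (hA : IsShLinearSet F A (j + k)) (hcard : (k + j + j : ℕ∞) ≤ A.encard) :
    IsShLinearSet F A j := by
  intro a b l m ha hb haA hbA hl hm hsum
  obtain ⟨c, hc, hcA⟩ :=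
    exists_injective_fin_mem_of_le_encard (le_encard_sdiff_range_union a b hcard)
  have hac : ∀ i t, a i ≠ c t := fun i t h ↦ (hcA t).2 (Or.inl ⟨i, h⟩)
  have hbc : ∀ i t, b i ≠ c t := fun i t h ↦ (hcA t).2 (Or.inr ⟨i, h⟩)
  obtain ⟨σ, hσb, hσm⟩ :=
    hA (Fin.append a c) (Fin.append b c) (Fin.append l 1) (Fin.append m 1)
    (Fin.append_injective_iff.mpr ⟨ha, hc, hac⟩)
    (Fin.append_injective_iff.mpr ⟨hb, hc, hbc⟩)
    (Fin.addCases (by simpa using haA) (by simpa using fun t ↦ (hcA t).1))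
    (Fin.addCases (by simpa using hbA) (by simpa using fun t ↦ (hcA t).1))
    (Fin.addCases (by simpa using hl) (by simp)) (Fin.addCases (by simpa using hm) (by simp))
    (by simp [Fin.sum_univ_add, hsum])
  have hσ : ∀ i, σ (Fin.castAdd k i) ∈ range (Fin.castAdd k) := by
    intro i
    have hi := hσb (Fin.castAdd k i)
    generalize σ (Fin.castAdd k i) = x at hi
    cases x using Fin.addCases with
    | left i' => exact ⟨i', rfl⟩
    | right t =>
      simp only [Fin.append_right, Fin.append_left] at hi
      exact absurd hi.symm (hac i t)
  obtain ⟨τ, hτ⟩ := σ.exists_restrict_castAdd hσ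
  refine ⟨τ, fun i ↦ ?_, fun i ↦ ?_⟩
  · simpa [hτ] using hσb (Fin.castAdd k i)
  · simpa [hτ] using hσm (Fin.castAdd k i)

theorem stmt_7_general {F V : Type*} [Field F] [AddCommGroup V] [Module F V]
    (A : Set V) (h r : ℕ)
    (h1 : 2 * h < r) (h2 : r ≤ A.ncard)
    (hA : IsShLinearSet F A h) :
    ∀ j : ℕ, 1 ≤ j → j ≤ h - 1 → IsShLinearSet F A j := by
  intro j _ hj
  obtain ⟨k, rfl⟩ := Nat.exists_eq_add_of_le (show j ≤ h by omega)
  refine hA.of_add (le_trans ?_ (ncard_le_encard A))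
  exact_mod_cast (show k + j + j ≤ A.ncard by omega)

theorem stmt_7 {F V : Type*} [Field F] [Fintype F] [AddCommGroup V] [Module F V]
    [FiniteDimensional F V] (A : Set V) (h r : ℕ)
    (hr : Module.finrank F V = r) (h1 : 2 * h < r) (h2 : r ≤ A.ncard)
    (hA : IsShLinearSet F A h) :
    ∀ j : ℕ, 1 ≤ j → j ≤ h - 1 → IsShLinearSet F A j :=
  stmt_7_general A h r h1 h2 hA
end

section
/- Let A be an S_h-linear set in F_q^r with 0 ∈ A, where 2h < r ≤ |A|. Then every subset of A consisting of 2h nonzero elements is linearly independent over F_q. -/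
/-! A nontrivial relation `∑_{x ∈ S} c x • x = 0` among at most `2h` nonzero elements of `A`
is split as `∑_{S₁} c x • x = ∑_{S₂} (-c x) • x` with `|S₁| = ⌈|S|/2⌉`, where `S₂` is the rest
of `S`, padded with the vector `0 ∈ A` when `|S|` is odd. Adding `∑_{x ∈ T} x` to both sides,
for a set `T` of `h - |S₁|` further elements of `A` (there is room since `|A| > 2h`), yields two
equal `h`-linear combinations with different supports, contradicting the `S_h` property. -/

open Finset

namespace IsShLinearSet

variable {F V : Type*} [Field F] [AddCommGroup V] [Module F V] {A : Set V} {h : ℕ}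

theorem eq_of_sum_smul_eq (hA : IsShLinearSet F A h) {S S' : Finset V}
    (hS : #S = h) (hS' : #S' = h) (hSA : ↑S ⊆ A) (hS'A : ↑S' ⊆ A) {l m : V → F}
    (hl : ∀ x ∈ S, l x ≠ 0) (hm : ∀ x ∈ S', m x ≠ 0)
    (heq : ∑ x ∈ S, l x • x = ∑ x ∈ S', m x • x) : S = S' := by
  obtain ⟨a, rfl⟩ :=
    Function.Embedding.exists_of_card_eq_finset (α := Fin h) (by simpa using hS.symm)
  obtain ⟨b, rfl⟩ :=
    Function.Embedding.exists_of_card_eq_finset (α := Fin h) (by simpa using hS'.symm)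
  simp only [coe_map, coe_univ, Set.image_univ, Set.range_subset_iff, mem_map, mem_univ,
    true_and, forall_exists_index, forall_apply_eq_imp_iff, sum_map] at *
  obtain ⟨σ, hσ, -⟩ := hA a b _ _ a.injective b.injective hSA hS'A hl hm heq
  have hab : ⇑b ∘ σ = a := funext hσ
  apply coe_injective
  simp only [coe_map, coe_univ, Set.image_univ, ← hab, σ.surjective.range_comp]

theorem sum_smul_ne_sum_smul (hA : IsShLinearSet F A h) {S₁ S₂ T : Finset V} {c₁ c₂ : V → F}
    (hS₁A : ↑S₁ ⊆ A) (hS₂A : ↑S₂ ⊆ A) (hTA : ↑T ⊆ A)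
    (h₁₂ : Disjoint S₁ S₂) (h₁T : Disjoint S₁ T) (h₂T : Disjoint S₂ T)
    (hcard : #S₁ = #S₂) (hh : #S₁ + #T = h) (hne : S₁.Nonempty)
    (hc₁ : ∀ x ∈ S₁, c₁ x ≠ 0) (hc₂ : ∀ x ∈ S₂, c₂ x ≠ 0) :
    ∑ x ∈ S₁, c₁ x • x ≠ ∑ x ∈ S₂, c₂ x • x := by
  classical
  have padded {S : Finset V} {c : V → F} (hST : Disjoint S T) :
      ∑ x ∈ S ∪ T, T.piecewise (fun _ => 1) c x • x = ∑ x ∈ S, c x • x + ∑ x ∈ T, x := by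
    rw [sum_union hST]
    congr 1
    · exact sum_congr rfl fun x hx => by
        rw [piecewise_eq_of_notMem _ _ _ (disjoint_left.mp hST hx)]
    · exact sum_congr rfl fun x hx => by rw [piecewise_eq_of_mem _ _ _ hx, one_smul]
  have padded_ne {S : Finset V} {c : V → F} (hc : ∀ x ∈ S, c x ≠ 0) :
      ∀ x ∈ S ∪ T, T.piecewise (fun _ => 1) c x ≠ 0 := by
    intro x hx
    by_cases hxT : x ∈ T
    · simp [hxT]
    · simpa [hxT] using hc x ((mem_union.mp hx).resolve_right hxT)
  intro heq
  have hunion : S₁ ∪ T = S₂ ∪ T :=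
    hA.eq_of_sum_smul_eq (by rw [card_union_of_disjoint h₁T, hh])
      (by rw [card_union_of_disjoint h₂T, ← hcard, hh])
      (by simpa using ⟨hS₁A, hTA⟩) (by simpa using ⟨hS₂A, hTA⟩) (padded_ne hc₁) (padded_ne hc₂)
      (by rw [padded h₁T, padded h₂T, heq])
  obtain ⟨x, hx⟩ := hne
  exact disjoint_left.mp (disjoint_union_right.mpr ⟨h₁₂, h₁T⟩) hx (hunion ▸ mem_union_left T hx)

theorem sum_smul_ne_zero (hA : IsShLinearSet F A h) (h0 : (0 : V) ∈ A)
    (hAcard : 2 * h < A.ncard) {S : Finset V} (hSA : ↑S ⊆ A) (hS0 : (0 : V) ∉ S)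
    (hS : #S ≤ 2 * h) (hne : S.Nonempty) {c : V → F} (hc : ∀ x ∈ S, c x ≠ 0) :
    ∑ x ∈ S, c x • x ≠ 0 := by
  classical
  intro hsum
  have hSpos : 0 < #S := card_pos.mpr hne
  obtain ⟨S₁, hS₁S, hS₁⟩ := exists_subset_card_eq (s := S) (n := (#S + 1) / 2) (by omega)
  have hS₂ : #(S \ S₁) = #S - (#S + 1) / 2 := by rw [card_sdiff_of_subset hS₁S, hS₁]
  obtain ⟨S₂, hS₂sub, hS₂sup, hS₂card⟩ := exists_subsuperset_card_eq
    (subset_insert 0 (S \ S₁)) (n := #S₁) (by omega) (by grind [card_insert_of_notMem])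
  have hAfin : A.Finite := Set.finite_of_ncard_pos (by omega)
  obtain ⟨T, hT, hTcard⟩ := exists_subset_card_eq (s := hAfin.toFinset \ insert 0 S)
    (n := h - #S₁) (by grind [le_card_sdiff, card_insert_le, Set.ncard_eq_toFinset_card])
  have hS₂S : S₂ ⊆ insert 0 S := hS₂sup.trans (insert_subset_insert 0 sdiff_subset)
  have hS0A : ↑(insert 0 S) ⊆ A := by simpa [Set.insert_subset_iff] using ⟨h0, hSA⟩
  have hTdisj : Disjoint (insert 0 S) T := disjoint_sdiff.mono_right hT
  let c₂ : V → F := Function.update (-c) 0 1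
  refine hA.sum_smul_ne_sum_smul (c₁ := c) (c₂ := c₂) ((coe_subset.mpr hS₁S).trans hSA)
    ((coe_subset.mpr hS₂S).trans hS0A)
    (fun x hx => by simpa using (mem_sdiff.mp (hT hx)).1) ?_
    (hTdisj.mono_left (hS₁S.trans (subset_insert 0 S))) (hTdisj.mono_left hS₂S) hS₂card.symm
    (by omega) (card_pos.mp (by omega)) (fun x hx => hc x (hS₁S hx)) ?_ ?_
  · exact (disjoint_insert_right.mpr ⟨fun h => hS0 (hS₁S h), disjoint_sdiff⟩).mono_right hS₂sup
  · intro x hx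
    rcases eq_or_ne x 0 with rfl | hx0
    · simp [c₂]
    · have hxS : x ∈ S := (mem_sdiff.mp ((mem_insert.mp (hS₂sup hx)).resolve_left hx0)).1
      simpa [c₂, hx0] using hc x hxS
  · have hsplit : ∑ x ∈ S₁, c x • x = ∑ x ∈ S \ S₁, (-c x) • x := by
      simpa [neg_smul, sum_neg_distrib, eq_neg_iff_add_eq_zero, add_comm, hsum]
        using sum_sdiff hS₁S (f := fun x => c x • x)
    have hpad : ∑ x ∈ S \ S₁, c₂ x • x = ∑ x ∈ S₂, c₂ x • x :=
      sum_subset hS₂sub fun x hx hx' => by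
        rw [(mem_insert.mp (hS₂sup hx)).resolve_right hx', smul_zero]
    rw [hsplit, ← hpad]
    refine sum_congr rfl fun x hx => ?_
    have hx0 : x ≠ 0 := fun h => hS0 (h ▸ (mem_sdiff.mp hx).1)
    simp [c₂, hx0]

theorem linearIndepOn (hA : IsShLinearSet F A h) (h0 : (0 : V) ∈ A)
    (hAcard : 2 * h < A.ncard) {B : Set V} (hBA : B ⊆ A) (hB : B.ncard ≤ 2 * h)
    (hB0 : (0 : V) ∉ B) : LinearIndepOn F id B := by
  classical
  by_contra hdep
  obtain ⟨f, hfB, hsum, hf⟩ := linearDepOn_iff.mp hdep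
  have hBfin : B.Finite := (Set.finite_of_ncard_pos (by omega)).subset hBA
  refine hA.sum_smul_ne_zero h0 hAcard (hfB.trans hBA)
    (fun h0f => hB0 (hfB h0f)) ?_ (Finsupp.support_nonempty_iff.mpr hf)
    (fun x => Finsupp.mem_support_iff.mp) hsum
  exact (Set.ncard_coe_finset _).symm.trans_le ((Set.ncard_le_ncard hfB hBfin).trans hB)

end IsShLinearSet

theorem stmt_9_general {F : Type*} [Field F] {r : ℕ} (A : Set (Fin r → F)) (h : ℕ)
    (h0 : (0 : Fin r → F) ∈ A) (h1 : 2 * h < r) (h2 : r ≤ A.ncard)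
    (hA : IsShLinearSet F A h) :
    ∀ B : Set (Fin r → F), B ⊆ A → B.ncard = 2 * h → (∀ x ∈ B, x ≠ 0) →
      LinearIndependent F (fun x : B => (x : Fin r → F)) :=
  fun _ hBA hB hB0 => hA.linearIndepOn h0 (by omega) hBA hB.le fun h => hB0 0 h rfl

theorem stmt_9 {F : Type*} [Field F] [Fintype F] {r : ℕ} (A : Set (Fin r → F)) (h : ℕ)
    (h0 : (0 : Fin r → F) ∈ A) (h1 : 2 * h < r) (h2 : r ≤ A.ncard)
    (hA : IsShLinearSet F A h) :
    ∀ B : Set (Fin r → F), B ⊆ A → B.ncard = 2 * h → (∀ x ∈ B, x ≠ 0) →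
      LinearIndependent F (fun x : B => (x : Fin r → F)) :=
  stmt_9_general A h h0 h1 h2 hA
end

section
/- Let A be a maximal S_h-linear set in F_q^r with 2h < r ≤ |A|. Then A contains a basis of F_q^r over F_q; in particular, A spans F_q^r. -/
/-
If `v ∉ span A`, then `insert v A` is still `S_h`-linear. Encode an `h`-linear combination of
distinct elements by its coefficient function, a finsupp of support size `h`. Two such finsupps
with equal value give `v` the same coefficient, as one sees modulo `span A`. If that coefficient
is nonzero, replace `v` in both by some `c ∈ A` occurring in neither (there is one, as
`|A| > 2h`) with coefficient `1`; the two new combinations are supported in `A` and still have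
equal value, so they coincide by `S_h`-linearity of `A`, and hence so do the original ones.
Maximality therefore forces `span A = ⊤`, and a spanning set contains a basis.
-/

open Finsupp Function

section FinsuppOfFamily

variable {ι α M : Type*} [Fintype ι] [AddCommMonoid M]

noncomputable def finsuppOfFamily (a : ι → α) (l : ι → M) : α →₀ M :=
  ∑ i, single (a i) (l i)

def coeffsOfCard (M : Type*) [Zero M] (A : Set α) (n : ℕ) : Set (α →₀ M) :=
  {f | ↑f.support ⊆ A ∧ f.support.card = n}

variable {a b : ι → α} {l m : ι → M}

theorem finsuppOfFamily_apply_self (ha : Injective a) (i : ι) :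
    finsuppOfFamily a l (a i) = l i := by
  classical
  simp [finsuppOfFamily, finsetSum_apply, single_apply, ha.eq_iff]

theorem support_finsuppOfFamily [DecidableEq α] (ha : Injective a) (hl : ∀ i, l i ≠ 0) :
    (finsuppOfFamily a l).support = Finset.univ.image a := by
  rw [finsuppOfFamily, support_sum_eq_biUnion]
  · simp [support_single _ (hl _), Finset.biUnion_singleton]
  · intro i j hij
    simpa [support_single _ (hl _)] using ha.ne hij

theorem finsuppOfFamily_mem_coeffsOfCard {A : Set α} (ha : Injective a) (haA : ∀ i, a i ∈ A)
    (hl : ∀ i, l i ≠ 0) : finsuppOfFamily a l ∈ coeffsOfCard M A (Fintype.card ι) := by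
  classical
  rw [coeffsOfCard, Set.mem_ofPred_eq, support_finsuppOfFamily ha hl,
    Finset.card_image_of_injective _ ha, Finset.coe_image]
  exact ⟨by simpa [Set.subset_def] using haA, Finset.card_univ⟩

theorem finsuppOfFamily_eq_iff (ha : Injective a) (hb : Injective b) (hl : ∀ i, l i ≠ 0)
    (hm : ∀ i, m i ≠ 0) : finsuppOfFamily a l = finsuppOfFamily b m ↔
      ∃ σ : Equiv.Perm ι, (∀ i, b (σ i) = a i) ∧ ∀ i, m (σ i) = l i := by
  classical
  constructor
  · intro hab
    have hrange : Set.range a = Set.range b := by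
      simpa [support_finsuppOfFamily, ha, hb, hl, hm] using
        congrArg (fun f : α →₀ M => (f.support : Set α)) hab
    let σ : Equiv.Perm ι := ((Equiv.ofInjective a ha).trans (Equiv.setCongr hrange)).trans
      (Equiv.ofInjective b hb).symm
    have hσ : ∀ i, b (σ i) = a i := fun i => Equiv.apply_ofInjective_symm hb _
    refine ⟨σ, hσ, fun i => ?_⟩
    rw [← finsuppOfFamily_apply_self (l := m) hb, ← hab, hσ, finsuppOfFamily_apply_self ha]
  · rintro ⟨σ, hσb, hσm⟩
    simp only [finsuppOfFamily, ← hσb, ← hσm]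
    exact Equiv.sum_comp σ (fun i => single (b i) (m i))

theorem exists_eq_finsuppOfFamily {n : ℕ} (f : α →₀ M)
    (hf : f.support.card = n) : ∃ (a : Fin n → α) (l : Fin n → M),
      Injective a ∧ (∀ i, a i ∈ f.support) ∧ (∀ i, l i ≠ 0) ∧ f = finsuppOfFamily a l := by
  let e := (Finset.equivFinOfCardEq hf).symm
  refine ⟨fun i => e i, fun i => f (e i), Subtype.val_injective.comp e.injective,
    fun i => (e i).2, fun i => mem_support_iff.1 (e i).2, ?_⟩
  conv_lhs => rw [← sum_single f]
  rw [Finsupp.sum, ← Finset.sum_coe_sort, finsuppOfFamily]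
  exact (Equiv.sum_comp e (fun x => single (x : α) (f x))).symm

end FinsuppOfFamily

theorem linearCombination_finsuppOfFamily {ι α R V : Type*} [Fintype ι] [Semiring R]
    [AddCommMonoid V] [Module R V] (v : α → V) (a : ι → α) (l : ι → R) :
    linearCombination R v (finsuppOfFamily a l) = ∑ i, l i • v (a i) := by
  simp [finsuppOfFamily, linearCombination_single]

theorem linearCombination_eq_smul_add_erase {α R V : Type*} [Semiring R] [AddCommMonoid V]
    [Module R V] (v : α → V) (f : α →₀ R) (x : α) :
    linearCombination R v f = f x • v x + linearCombination R v (f.erase x) := by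
  conv_lhs => rw [← single_add_erase x f]
  rw [map_add, linearCombination_single]

theorem mem_coeffsOfCard_of_apply_eq_zero {α M : Type*} [Zero M] {A : Set α} {h : ℕ} {v : α}
    {f : α →₀ M} (hf : f ∈ coeffsOfCard M (insert v A) h) (hfv : f v = 0) :
    f ∈ coeffsOfCard M A h :=
  ⟨fun y hy => (hf.1 hy).resolve_left (by rintro rfl; exact mem_support_iff.1 hy hfv), hf.2⟩

theorem erase_add_single_mem_coeffsOfCard {α M : Type*} [AddZeroClass M] {A : Set α} {h : ℕ}
    {v c : α} {f : α →₀ M}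
    (hf : f ∈ coeffsOfCard M (insert v A) h) (hfv : f v ≠ 0) (hcA : c ∈ A) (hcf : c ∉ f.support)
    {x : M} (hx : x ≠ 0) :
    f.erase v + single c x ∈ coeffsOfCard M A h := by
  classical
  obtain ⟨hfA, hfh⟩ := hf
  have hvf : v ∈ f.support := mem_support_iff.2 hfv
  have hcf' : c ∉ f.support.erase v := fun hc => hcf (Finset.mem_of_mem_erase hc)
  have hsupp : (f.erase v + single c x).support = insert c (f.support.erase v) := by
    rw [support_add_eq, support_erase, support_single _ hx, Finset.union_comm, Finset.insert_eq]
    rwa [support_erase, support_single _ hx, Finset.disjoint_singleton_right]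
  rw [coeffsOfCard, Set.mem_ofPred_eq, hsupp, Finset.card_insert_of_notMem hcf',
    Finset.card_erase_of_mem hvf, Finset.coe_insert, Finset.coe_erase]
  refine ⟨Set.insert_subset hcA fun y hy => (hfA hy.1).resolve_left hy.2, ?_⟩
  have : 0 < f.support.card := Finset.card_pos.2 ⟨v, hvf⟩
  omega

theorem linearCombination_erase_mem_span {R V : Type*} [Semiring R] [AddCommMonoid V]
    [Module R V] {A : Set V} {v : V} {f : V →₀ R}
    (hf : ↑f.support ⊆ insert v A) : linearCombination R id (f.erase v) ∈ Submodule.span R A := by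
  classical
  have hsupp : ↑(f.erase v).support ⊆ A := by
    intro x hx
    rw [support_erase, Finset.coe_erase] at hx
    exact (hf hx.1).resolve_left hx.2
  rw [← Set.image_id A]
  exact (mem_span_image_iff_linearCombination R).2 ⟨_, (mem_supported R _).2 hsupp, rfl⟩

section ShLinear

variable {F V : Type*} [Field F] [AddCommGroup V] [Module F V]

theorem isShLinearSet_iff_injOn {A : Set V} {h : ℕ} :
    IsShLinearSet F A h ↔ Set.InjOn (linearCombination F id) (coeffsOfCard F A h) := by
  constructor
  · rintro hA f ⟨hfA, hf⟩ g ⟨hgA, hg⟩ hfg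
    obtain ⟨a, l, ha, haf, hl, rfl⟩ := exists_eq_finsuppOfFamily f hf
    obtain ⟨b, m, hb, hbg, hm, rfl⟩ := exists_eq_finsuppOfFamily g hg
    simp only [linearCombination_finsuppOfFamily, id] at hfg
    exact (finsuppOfFamily_eq_iff ha hb hl hm).2
      (hA a b l m ha hb (fun i => hfA (haf i)) (fun i => hgA (hbg i)) hl hm hfg)
  · intro hA a b l m ha hb haA hbA hl hm hsum
    refine (finsuppOfFamily_eq_iff ha hb hl hm).1 (hA ?_ ?_ ?_)
    · simpa only [Fintype.card_fin] using finsuppOfFamily_mem_coeffsOfCard ha haA hl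
    · simpa only [Fintype.card_fin] using finsuppOfFamily_mem_coeffsOfCard hb hbA hm
    · simpa only [linearCombination_finsuppOfFamily, id] using hsum

theorem apply_eq_of_linearCombination_eq {A : Set V} {v : V} {f g : V →₀ F}
    (hf : ↑f.support ⊆ insert v A) (hg : ↑g.support ⊆ insert v A)
    (hfg : linearCombination F id f = linearCombination F id g) (hv : v ∉ Submodule.span F A) :
    f v = g v := by
  by_contra hne
  refine hv ((Submodule.smul_mem_iff _ (sub_ne_zero.2 hne)).1 ?_)
  have hdiff : (f v - g v) • v =
      linearCombination F id (g.erase v) - linearCombination F id (f.erase v) := by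
    have := linearCombination_eq_smul_add_erase id f v
    rw [hfg, linearCombination_eq_smul_add_erase id g v, id] at this
    linear_combination (norm := module) -this
  rw [hdiff]
  exact sub_mem (linearCombination_erase_mem_span hg) (linearCombination_erase_mem_span hf)

theorem injOn_coeffsOfCard_insert {A : Set V} {h : ℕ}
    (hA : Set.InjOn (linearCombination F id) (coeffsOfCard F A h)) (hcard : 2 * h < A.ncard)
    {v : V} (hv : v ∉ Submodule.span F A) :
    Set.InjOn (linearCombination F id) (coeffsOfCard F (insert v A) h) := by
  classical
  intro f hf g hg hfg
  have hcoef := apply_eq_of_linearCombination_eq hf.1 hg.1 hfg hv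
  by_cases hv0 : f v = 0
  · exact hA (mem_coeffsOfCard_of_apply_eq_zero hf hv0)
      (mem_coeffsOfCard_of_apply_eq_zero hg (hcoef ▸ hv0)) hfg
  obtain ⟨c, hcA, hc⟩ : ∃ c ∈ A, c ∉ (↑(f.support ∪ g.support) : Set V) := by
    refine Set.exists_mem_notMem_of_ncard_lt_ncard ?_
    rw [Set.ncard_coe_finset]
    have := Finset.card_union_le f.support g.support
    have := hf.2
    have := hg.2
    omega
  rw [Finset.coe_union, Set.mem_union, not_or] at hc
  have herase : linearCombination F id (f.erase v) = linearCombination F id (g.erase v) := by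
    have := linearCombination_eq_smul_add_erase id f v
    rw [hfg, linearCombination_eq_smul_add_erase id g v, hcoef] at this
    exact (add_left_cancel this).symm
  have hshift : f.erase v + single c 1 = g.erase v + single c 1 :=
    hA (erase_add_single_mem_coeffsOfCard hf hv0 hcA hc.1 one_ne_zero)
      (erase_add_single_mem_coeffsOfCard hg (hcoef ▸ hv0) hcA hc.2 one_ne_zero)
      (by rw [map_add, map_add, herase])
  rw [← single_add_erase v f, ← single_add_erase v g, hcoef, add_right_cancel hshift]

theorem IsShLinearSet.insert_of_notMem_span {A : Set V} {h : ℕ} (hA : IsShLinearSet F A h)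
    (hcard : 2 * h < A.ncard) {v : V} (hv : v ∉ Submodule.span F A) :
    IsShLinearSet F (insert v A) h :=
  isShLinearSet_iff_injOn.2 (injOn_coeffsOfCard_insert (isShLinearSet_iff_injOn.1 hA) hcard hv)

end ShLinear

theorem stmt_11_general {F : Type*} [Field F] {r : ℕ} (A : Set (Fin r → F)) (h : ℕ)
    (h1 : 2 * h < r) (h2 : r ≤ A.ncard)
    (hA : IsShLinearSet F A h)
    (hmax : ∀ B : Set (Fin r → F), IsShLinearSet F B h → A ⊆ B → A = B) :
    (∃ B : Set (Fin r → F), B ⊆ A ∧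
      LinearIndependent F (fun x : B => (x : Fin r → F)) ∧
      Submodule.span F B = ⊤) ∧
    Submodule.span F A = ⊤ := by
  have hspan : Submodule.span F A = ⊤ := by
    refine Submodule.eq_top_iff'.2 fun v => ?_
    by_contra hv
    have hvA : v ∉ A := fun hvA => hv (Submodule.subset_span hvA)
    have hA' := hA.insert_of_notMem_span (by omega) hv
    exact hvA (hmax _ hA' (Set.subset_insert v A) ▸ Set.mem_insert v A)
  obtain ⟨B, hBA, hBspan, hBindep⟩ := exists_linearIndependent F A
  exact ⟨⟨B, hBA, hBindep, hBspan.trans hspan⟩, hspan⟩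

theorem stmt_11 {F : Type*} [Field F] [Fintype F] {r : ℕ} (A : Set (Fin r → F)) (h : ℕ)
    (h1 : 2 * h < r) (h2 : r ≤ A.ncard)
    (hA : IsShLinearSet F A h)
    (hmax : ∀ B : Set (Fin r → F), IsShLinearSet F B h → A ⊆ B → A = B) :
    (∃ B : Set (Fin r → F), B ⊆ A ∧
      LinearIndependent F (fun x : B => (x : Fin r → F)) ∧
      Submodule.span F B = ⊤) ∧
    Submodule.span F A = ⊤ :=
  stmt_11_general A h h1 h2 hA hmax
end

section
/- Let h ≥ 2 and n > r ≥ 2h. If there exists an S_h-linear set with n+1 elements in F_q^r, then there exists a linear code over F_q of length n, dimension n - r, and minimum distance at least 2h+1. -/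
/-!
The code is an `(n - r)`-dimensional subspace of the kernel of the `r × n` matrix whose columns
are `n` of the points of `A`, so it suffices that no nonzero `c` of weight at most `2h` satisfies
`∑ cᵢ aᵢ = 0`. Write such a `c` as `x - (x - c)` with both parts of the same weight `k ≤ h`;
adding the same `h - k` further points of `A` to both sides turns `∑ xᵢ aᵢ = ∑ (x - c)ᵢ aᵢ` into
an equality of two `h`-linear combinations, so the `S_h` property forces `c = 0`. Such a split
exists for even weight, and for odd weight when `q > 2` by letting one point `aᵢ₀` occur on both
sides, with coefficients `λ` and `λ - cᵢ₀` for some `λ ∉ {0, cᵢ₀}`. Over `𝔽₂` one uses the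
columns `aᵢ - a₀` instead: a dependency among them is a dependency among the `n + 1` points with
coefficient sum zero, hence of even weight.
-/

open Finset

section Hamming

variable {ι β : Type*} [Fintype ι] [DecidableEq β]

theorem hammingNorm_add_of_disjoint [AddZeroClass β] {x y : ι → β}
    (hxy : ∀ i, x i = 0 ∨ y i = 0) : hammingNorm (x + y) = hammingNorm x + hammingNorm y := by
  classical
  unfold hammingNorm
  rw [← card_union_of_disjoint]
  · congr 1
    ext i
    rcases hxy i with h | h <;> simp [h]
  · exact disjoint_filter.2 fun i _ hx hy => (hxy i).elim hx hy

theorem hammingNorm_eq_card_of_forall_ne_zero_iff [Zero β] {x : ι → β} {s : Finset ι}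
    (hs : ∀ i, x i ≠ 0 ↔ i ∈ s) : hammingNorm x = #s := by
  unfold hammingNorm
  congr 1
  ext i
  simp [hs]

theorem hammingNorm_indicator_one [Zero β] [One β] [NeZero (1 : β)]
    (s : Finset ι) : hammingNorm ((s : Set ι).indicator (1 : ι → β)) = #s :=
  hammingNorm_eq_card_of_forall_ne_zero_iff fun i => by by_cases hi : i ∈ s <;> simp [hi]

theorem hammingNorm_cons_le [Zero β] {n : ℕ} (b : β) (x : Fin n → β) :
    hammingNorm (Fin.cons b x : Fin (n + 1) → β) ≤ hammingNorm x + 1 := by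
  unfold hammingNorm
  rw [Fin.card_filter_univ_succ']
  split_ifs <;> simp [add_comm]

end Hamming

theorem Submodule.exists_le_finrank_eq {K M : Type*} [DivisionRing K] [AddCommGroup M]
    [Module K M] (p : Submodule K M) {k : ℕ} (hk : k ≤ Module.finrank K p) :
    ∃ q ≤ p, Module.finrank K q = k := by
  obtain ⟨f, hf⟩ := exists_linearIndependent_of_le_finrank hk
  refine ⟨span K (Set.range (p.subtype ∘ f)), ?_, ?_⟩
  · rw [span_le]
    rintro _ ⟨i, rfl⟩
    exact (f i).2
  · rw [finrank_span_eq_card (hf.map' _ p.ker_subtype), Fintype.card_fin]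

theorem LinearMap.exists_le_ker_finrank_eq {K M N : Type*} [DivisionRing K] [AddCommGroup M]
    [Module K M] [AddCommGroup N] [Module K N] [FiniteDimensional K M] [FiniteDimensional K N]
    (φ : M →ₗ[K] N) :
    ∃ C ≤ LinearMap.ker φ, Module.finrank K C = Module.finrank K M - Module.finrank K N := by
  apply Submodule.exists_le_finrank_eq
  have := φ.finrank_range_add_finrank_ker
  have := Submodule.finrank_le (LinearMap.range φ)
  omega

theorem even_hammingNorm_of_sum_eq_zero {ι F : Type*} [Fintype ι] [Field F] [Fintype F]
    [DecidableEq F] (hF : Fintype.card F = 2) {c : ι → F} (hc : ∑ i, c i = 0) :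
    Even (hammingNorm c) := by
  have : Fact (Nat.Prime 2) := ⟨Nat.prime_two⟩
  have : CharP F 2 := charP_of_card_eq_prime hF
  have hone (z : F) (hz : z ≠ 0) : z = 1 := by
    simpa [hF] using FiniteField.pow_card_sub_one_eq_one z hz
  rw [even_iff_two_dvd, ← CharP.cast_eq_zero_iff F 2, ← hc, ← sum_filter_ne_zero]
  unfold hammingNorm
  rw [Finset.sum_congr rfl fun i hi => hone _ (mem_filter.1 hi).2]
  simp

namespace IsShLinearSet

variable {F V ι : Type*} [Field F] [DecidableEq F] [AddCommGroup V] [Module F V] [Fintype ι]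
  {A : Set V} {h : ℕ} {a : ι → V}

theorem apply_eq_of_sum_smul_eq (hA : IsShLinearSet F A h) (ha : Function.Injective a)
    (haA : ∀ i, a i ∈ A) {x y : ι → F} (hx : hammingNorm x = h) (hy : hammingNorm y = h)
    (hxy : ∑ i, x i • a i = ∑ i, y i • a i) {i : ι} (hi : x i ≠ 0) : y i = x i := by
  let ex : Fin h ≃ ({i | x i ≠ 0} : Finset ι) := (finCongr hx).symm.trans (equivFin _).symm
  let ey : Fin h ≃ ({i | y i ≠ 0} : Finset ι) := (finCongr hy).symm.trans (equivFin _).symm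
  have hsum (z : ι → F) (e : Fin h ≃ ({i | z i ≠ 0} : Finset ι)) :
      ∑ j, z (e j) • a (e j) = ∑ i, z i • a i := by
    rw [e.sum_comp (fun k => z k • a k), sum_coe_sort _ (fun k => z k • a k)]
    exact sum_filter_of_ne fun k _ hk hz => hk (by rw [hz, zero_smul])
  obtain ⟨σ, hσa, hσl⟩ := hA (fun j => a (ex j)) (fun j => a (ey j)) (fun j => x (ex j))
    (fun j => y (ey j)) (ha.comp (Subtype.val_injective.comp ex.injective))
    (ha.comp (Subtype.val_injective.comp ey.injective)) (fun _ => haA _) (fun _ => haA _)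
    (fun j => (mem_filter.1 (ex j).2).2) (fun j => (mem_filter.1 (ey j).2).2)
    (by rw [hsum x ex, hsum y ey, hxy])
  obtain ⟨j, hj⟩ := ex.surjective ⟨i, mem_filter.2 ⟨mem_univ i, hi⟩⟩
  have hij : (ey (σ j) : ι) = i := by rw [ha (hσa j), hj]
  simpa [hij, hj] using hσl j

theorem eq_of_sum_smul_eq_s13 (hA : IsShLinearSet F A h) (ha : Function.Injective a)
    (haA : ∀ i, a i ∈ A) {x y : ι → F} (hx : hammingNorm x = h) (hy : hammingNorm y = h)
    (hxy : ∑ i, x i • a i = ∑ i, y i • a i) : x = y := by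
  funext i
  by_cases hxi : x i = 0
  · by_contra hne
    have hyi : y i ≠ 0 := hxi ▸ Ne.symm hne
    exact hyi ((hA.apply_eq_of_sum_smul_eq ha haA hy hx hxy.symm hyi).symm.trans hxi)
  · exact (hA.apply_eq_of_sum_smul_eq ha haA hx hy hxy hxi).symm

theorem eq_of_sum_smul_eq_of_le (hA : IsShLinearSet F A h) (ha : Function.Injective a)
    (haA : ∀ i, a i ∈ A) (hι : 2 * h ≤ Fintype.card ι) {x y : ι → F}
    (hxy_norm : hammingNorm x = hammingNorm y) (hxh : hammingNorm x ≤ h)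
    (hxy : ∑ i, x i • a i = ∑ i, y i • a i) : x = y := by
  classical
  set S : Finset ι := {i | x i ≠ 0 ∨ y i ≠ 0}
  have hS : #S ≤ 2 * hammingNorm x := calc
    #S = #(({i | x i ≠ 0} : Finset ι) ∪ ({i | y i ≠ 0} : Finset ι)) := by rw [← filter_or]
    _ ≤ hammingNorm x + hammingNorm y := card_union_le _ _
    _ = 2 * hammingNorm x := by omega
  obtain ⟨P, hPS, hP⟩ := exists_subset_card_eq (s := Sᶜ) (n := h - hammingNorm x)
    (by rw [card_compl]; omega)
  have hzero {z : ι → F} (hz : ∀ i, z i ≠ 0 → i ∈ S) {i : ι} (hi : i ∈ P) : z i = 0 := by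
    by_contra hzi
    exact mem_compl.1 (hPS hi) (hz i hzi)
  have hpad {z : ι → F} (hz : ∀ i, z i ≠ 0 → i ∈ S) (hzn : hammingNorm z = hammingNorm x) :
      hammingNorm (z + (P : Set ι).indicator 1) = h := by
    rw [hammingNorm_add_of_disjoint, hammingNorm_indicator_one, hzn, hP]
    · omega
    · intro i
      by_cases hi : i ∈ P
      · exact Or.inl (hzero hz hi)
      · exact Or.inr (by simp [hi])
  refine add_right_cancel (hA.eq_of_sum_smul_eq_s13 ha haA
    (hpad (fun i hi => by simp [S, hi]) rfl) (hpad (fun i hi => by simp [S, hi]) hxy_norm.symm) ?_)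
  simp only [Pi.add_apply, add_smul, sum_add_distrib, hxy]

theorem hammingNorm_sub_ne (hA : IsShLinearSet F A h) (ha : Function.Injective a)
    (haA : ∀ i, a i ∈ A) (hι : 2 * h ≤ Fintype.card ι) {c : ι → F} (hc : c ≠ 0)
    (hsum : ∑ i, c i • a i = 0) {x : ι → F} (hx : hammingNorm x ≤ h) :
    hammingNorm (x - c) ≠ hammingNorm x := by
  intro hxc
  have := hA.eq_of_sum_smul_eq_of_le ha haA hι hxc.symm hx
    (by simp only [Pi.sub_apply, sub_smul, sum_sub_distrib, hsum, sub_zero])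
  exact hc (sub_eq_self.1 this.symm)

theorem two_mul_lt_hammingNorm_of_even (hA : IsShLinearSet F A h) (ha : Function.Injective a)
    (haA : ∀ i, a i ∈ A) (hι : 2 * h ≤ Fintype.card ι) {c : ι → F} (hc : c ≠ 0)
    (hsum : ∑ i, c i • a i = 0) (heven : Even (hammingNorm c)) : 2 * h < hammingNorm c := by
  classical
  obtain ⟨s, hs⟩ := heven
  by_contra! hle
  unfold hammingNorm at hs hle
  obtain ⟨T, hT, hTs⟩ := exists_subset_card_eq (s := {i | c i ≠ 0}) (n := s) (by omega)
  set x : ι → F := fun i => if i ∈ T then c i else 0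
  have hx : hammingNorm x = s := by
    rw [← hTs]
    refine hammingNorm_eq_card_of_forall_ne_zero_iff fun i => ?_
    by_cases hi : i ∈ T
    · simpa [x, hi] using (mem_filter.1 (hT hi)).2
    · simp [x, hi]
  have hxc : hammingNorm (x - c) = s := by
    have : #(({i | c i ≠ 0} : Finset ι) \ T) = s := by
      rw [card_sdiff_of_subset hT, hTs]; omega
    rw [← this]
    refine hammingNorm_eq_card_of_forall_ne_zero_iff fun i => ?_
    by_cases hi : i ∈ T <;> simp [x, hi]
  exact hA.hammingNorm_sub_ne ha haA hι hc hsum (by omega) (hxc.trans hx.symm)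

theorem two_mul_lt_hammingNorm_of_odd [Fintype F] (hF : 2 < Fintype.card F)
    (hA : IsShLinearSet F A h) (ha : Function.Injective a)
    (haA : ∀ i, a i ∈ A) (hι : 2 * h ≤ Fintype.card ι) {c : ι → F} (hc : c ≠ 0)
    (hsum : ∑ i, c i • a i = 0) (hodd : Odd (hammingNorm c)) : 2 * h < hammingNorm c := by
  classical
  obtain ⟨s, hs⟩ := hodd
  by_contra! hle
  unfold hammingNorm at hs hle
  obtain ⟨i₀, hi₀⟩ : ({i | c i ≠ 0} : Finset ι).Nonempty := by rw [← card_pos]; omega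
  obtain ⟨T, hT, hTs⟩ := exists_subset_card_eq (s := ({i | c i ≠ 0} : Finset ι).erase i₀)
    (n := s) (by rw [card_erase_of_mem hi₀]; omega)
  have hi₀T : i₀ ∉ T := fun hi => notMem_erase i₀ _ (hT hi)
  obtain ⟨l, -, hl⟩ : ∃ l ∈ (univ : Finset F), l ∉ ({0, c i₀} : Finset F) :=
    exists_mem_notMem_of_card_lt_card ((card_le_two).trans_lt hF)
  simp only [mem_insert, mem_singleton, not_or] at hl
  set x : ι → F := fun i => if i = i₀ then l else if i ∈ T then c i else 0
  have hx : hammingNorm x = s + 1 := by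
    rw [← hTs, ← card_insert_of_notMem hi₀T]
    refine hammingNorm_eq_card_of_forall_ne_zero_iff fun i => ?_
    by_cases hii₀ : i = i₀
    · simp [x, hii₀, hl.1]
    by_cases hi : i ∈ T
    · simpa [x, hii₀, hi] using (mem_filter.1 (mem_of_mem_erase (hT hi))).2
    · simp [x, hii₀, hi]
  have hxc : hammingNorm (x - c) = s + 1 := by
    have : #(({i | c i ≠ 0} : Finset ι) \ T) = s + 1 := by
      rw [card_sdiff_of_subset (hT.trans (erase_subset _ _)), hTs]; omega
    rw [← this]
    refine hammingNorm_eq_card_of_forall_ne_zero_iff fun i => ?_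
    by_cases hii₀ : i = i₀
    · subst hii₀
      simp [x, hi₀T, sub_ne_zero.2 hl.2, (mem_filter.1 hi₀).2]
    by_cases hi : i ∈ T <;> simp [x, hii₀, hi]
  exact hA.hammingNorm_sub_ne ha haA hι hc hsum (by omega) (hxc.trans hx.symm)

theorem two_mul_lt_hammingNorm [Fintype F] (hF : 2 < Fintype.card F)
    (hA : IsShLinearSet F A h) (ha : Function.Injective a)
    (haA : ∀ i, a i ∈ A) (hι : 2 * h ≤ Fintype.card ι) {c : ι → F} (hc : c ≠ 0)
    (hsum : ∑ i, c i • a i = 0) : 2 * h < hammingNorm c :=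
  (Nat.even_or_odd _).elim (hA.two_mul_lt_hammingNorm_of_even ha haA hι hc hsum)
    (hA.two_mul_lt_hammingNorm_of_odd hF ha haA hι hc hsum)

end IsShLinearSet

theorem sum_cons_neg_sum_smul {R M : Type*} [Ring R] [AddCommGroup M] [Module R M] {n : ℕ}
    (x : Fin n → R) (a : Fin (n + 1) → M) :
    ∑ i, (Fin.cons (-∑ j, x j) x : Fin (n + 1) → R) i • a i = ∑ i, x i • (a i.succ - a 0) := by
  simp only [Fin.sum_univ_succ, Fin.cons_zero, Fin.cons_succ, smul_sub, sum_sub_distrib,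
    neg_smul, sum_smul]
  abel

theorem stmt_13_general {F : Type*} [Field F] [Fintype F] [DecidableEq F] {n r h : ℕ}
    (h1 : 2 * h ≤ r) (h2 : r < n)
    (hex : ∃ A : Set (Fin r → F), IsShLinearSet F A h ∧ A.ncard = n + 1) :
    ∃ C : Submodule F (Fin n → F), Module.finrank F C = n - r ∧
      ∀ x ∈ C, x ≠ 0 → 2 * h + 1 ≤ hammingNorm x := by
  obtain ⟨A, hA, hcard⟩ := hex
  lift A to Finset (Fin r → F) using Set.finite_of_ncard_pos (by omega)
  rw [Set.ncard_coe_finset] at hcard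
  set a : Fin (n + 1) → Fin r → F := fun i => A.equivFin.symm (Fin.cast hcard.symm i)
  have ha : Function.Injective a :=
    Subtype.val_injective.comp (A.equivFin.symm.injective.comp (Fin.cast_injective _))
  have haA (i : Fin (n + 1)) : a i ∈ (A : Set (Fin r → F)) := (A.equivFin.symm _).2
  suffices ∃ u : Fin n → Fin r → F,
      ∀ x : Fin n → F, x ≠ 0 → ∑ i, x i • u i = 0 → 2 * h + 1 ≤ hammingNorm x by
    obtain ⟨u, hu⟩ := this
    obtain ⟨C, hCker, hC⟩ := (Fintype.linearCombination F u).exists_le_ker_finrank_eq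
    refine ⟨C, by simpa using hC, fun x hx hx0 => hu x hx0 ?_⟩
    simpa [Fintype.linearCombination_apply] using hCker hx
  by_cases hF : 2 < Fintype.card F
  · exact ⟨fun i => a i.succ, fun x hx hsum => hA.two_mul_lt_hammingNorm hF
      (ha.comp (Fin.succ_injective n)) (fun _ => haA _) (by rw [Fintype.card_fin]; omega) hx hsum⟩
  have hF2 : Fintype.card F = 2 := by have := Fintype.one_lt_card (α := F); omega
  refine ⟨fun i => a i.succ - a 0, fun x hx hsum => ?_⟩
  set c : Fin (n + 1) → F := Fin.cons (-∑ i, x i) x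
  have hc : c ≠ 0 := fun hc0 => hx (congrArg Fin.tail hc0 :)
  have heven : Even (hammingNorm c) :=
    even_hammingNorm_of_sum_eq_zero hF2 (by simp [c, Fin.sum_univ_succ])
  have hlt := hA.two_mul_lt_hammingNorm_of_even ha haA (by rw [Fintype.card_fin]; omega) hc
    ((sum_cons_neg_sum_smul x a).trans hsum) heven
  have hcx : hammingNorm c ≤ hammingNorm x + 1 := hammingNorm_cons_le _ _
  obtain ⟨k, hk⟩ := heven
  omega

theorem stmt_13 {F : Type*} [Field F] [Fintype F] [DecidableEq F] {n r h : ℕ}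
    (hh : 2 ≤ h) (h1 : 2 * h ≤ r) (h2 : r < n)
    (hex : ∃ A : Set (Fin r → F), IsShLinearSet F A h ∧ A.ncard = n + 1) :
    ∃ C : Submodule F (Fin n → F), Module.finrank F C = n - r ∧
      ∀ x ∈ C, x ≠ 0 → 2 * h + 1 ≤ hammingNorm x :=
  stmt_13_general h1 h2 hex
end

section
/- If there exists an [n, k, d] linear code over F_q with d ≥ 2h+1, then there exists an S_h-set of n+1 elements in F_q^{n-k}, where n-k ≥ 2h. -/
/-! Let `c i ∈ F^r` be the columns of a parity-check matrix of `C`, so that `∑ i, f i • c i = 0`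
exactly when `f ∈ C`. As `d > 2h`, no nonzero `f` of Hamming weight at most `2h` is such a
relation: any `2h` columns are linearly independent (so `2h ≤ r`), and the columns are nonzero
and pairwise distinct. If two `h`-subsets of `{0} ∪ {c i}` have equal sums, the difference of the
indicator vectors of their nonzero parts is a relation of weight at most `2h`, so the nonzero
parts coincide, and then so do the subsets, having the same size. -/

theorem hammingNorm_le_card_of_eq_zero {ι β : Type*} [Fintype ι] [Zero β] [DecidableEq β]
    {f : ι → β} (s : Finset ι) (hf : ∀ i ∉ s, f i = 0) : hammingNorm f ≤ s.card :=
  Finset.card_le_card fun i hi => by_contra fun his => (Finset.mem_filter.1 hi).2 (hf i his)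

theorem Finset.eq_of_erase_eq_of_card_eq {α : Type*} [DecidableEq α] {s t : Finset α} {a : α}
    (h : s.erase a = t.erase a) (hst : s.card = t.card) : s = t := by
  by_cases has : a ∈ s <;> by_cases hat : a ∈ t
  · rw [← insert_erase has, ← insert_erase hat, h]
  · have := card_erase_add_one has
    rw [h, erase_eq_of_notMem hat] at this
    omega
  · have := card_erase_add_one hat
    rw [← h, erase_eq_of_notMem has] at this
    omega
  · rwa [erase_eq_of_notMem has, erase_eq_of_notMem hat] at h

theorem Finset.erase_eq_map_filter_mem {α β : Type*} [Fintype α] [DecidableEq β] {c : α ↪ β}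
    {a : β} (ha : a ∉ Set.range c) {A : Finset β} (hA : ↑A ⊆ insert a (Set.range c)) :
    A.erase a = (univ.filter (c · ∈ A)).map c := by
  ext x
  simp only [mem_erase, mem_map, mem_filter, mem_univ, true_and]
  constructor
  · rintro ⟨hxa, hxA⟩
    obtain ⟨i, rfl⟩ := (hA hxA).resolve_left hxa
    exact ⟨i, hxA, rfl⟩
  · rintro ⟨i, hiA, rfl⟩
    exact ⟨fun hia => ha ⟨i, hia⟩, hiA⟩

theorem isShSet_of_finset {G : Type*} [AddCommGroup G] {S : Set G} {h : ℕ}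
    (hS : ∀ A B : Finset G, ↑A ⊆ S → ↑B ⊆ S → A.card = h → B.card = h →
      ∑ x ∈ A, x = ∑ x ∈ B, x → A = B) :
    IsShSet S h := by
  intro a b ha hb haS hbS hab
  have := hS (Finset.univ.map ⟨a, ha⟩) (Finset.univ.map ⟨b, hb⟩)
    (by simpa [Set.range_subset_iff] using haS) (by simpa [Set.range_subset_iff] using hbS)
    (by simp) (by simp) (by simpa using hab)
  simpa using congrArg ((↑) : Finset G → Set G) this

theorem Submodule.exists_linearMap_ker_eq {K V : Type*} [Field K] [AddCommGroup V] [Module K V]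
    [FiniteDimensional K V] (C : Submodule K V) {r : ℕ}
    (hr : Module.finrank K C + r = Module.finrank K V) :
    ∃ π : V →ₗ[K] (Fin r → K), LinearMap.ker π = C := by
  have hQ : Module.finrank K (V ⧸ C) = Module.finrank K (Fin r → K) := by
    have := C.finrank_quotient_add_finrank
    rw [Module.finrank_fin_fun]
    omega
  exact ⟨(LinearEquiv.ofFinrankEq _ _ hQ).toLinearMap ∘ₗ C.mkQ, by
    rw [LinearEquiv.ker_comp, Submodule.ker_mkQ]⟩

theorem Submodule.exists_sum_smul_eq_zero_iff_mem {K ι : Type*} [Field K] [Fintype ι]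
    (C : Submodule K (ι → K)) {r : ℕ} (hr : Module.finrank K C + r = Fintype.card ι) :
    ∃ c : ι → Fin r → K, ∀ f : ι → K, ∑ i, f i • c i = 0 ↔ f ∈ C := by
  classical
  obtain ⟨π, hπ⟩ :=
    C.exists_linearMap_ker_eq (hr.trans (Module.finrank_fintype_fun_eq_card K).symm)
  refine ⟨fun i => π fun j => if i = j then 1 else 0, fun f => ?_⟩
  rw [← LinearMap.pi_apply_eq_sum_univ, ← LinearMap.mem_ker, hπ]

section ParityCheck

variable {K ι M : Type*} [Ring K] [DecidableEq K] [Fintype ι] [AddCommGroup M] [Module K M]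
  {c : ι → M} {w : ℕ}

theorem Finset.eq_of_sum_eq_of_card_add_card_le [Nontrivial K]
    (hc : ∀ f : ι → K, ∑ i, f i • c i = 0 → hammingNorm f ≤ w → f = 0) {I J : Finset ι}
    (hIJ : I.card + J.card ≤ w) (hsum : ∑ i ∈ I, c i = ∑ i ∈ J, c i) : I = J := by
  classical
  let f : ι → K := fun j => (if j ∈ I then 1 else 0) - (if j ∈ J then 1 else 0)
  have hf : ∑ i, f i • c i = 0 := by
    simp only [f, sub_smul, ite_smul, one_smul, zero_smul, Finset.sum_sub_distrib,
      Finset.sum_ite_mem, Finset.univ_inter, hsum, sub_self]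
  have hwt : hammingNorm f ≤ w := by
    refine (hammingNorm_le_card_of_eq_zero (I ∪ J) fun j hj => ?_).trans
      ((card_union_le I J).trans hIJ)
    simp only [mem_union, not_or] at hj
    simp [f, hj.1, hj.2]
  ext j
  have := congrFun (hc f hf hwt) j
  by_cases hI : j ∈ I <;> by_cases hJ : j ∈ J <;> simp [f, hI, hJ] at this ⊢

theorem injective_of_sum_smul_eq_zero [Nontrivial K]
    (hc : ∀ f : ι → K, ∑ i, f i • c i = 0 → hammingNorm f ≤ w → f = 0) (hw : 2 ≤ w) :
    Function.Injective c := fun i j hij =>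
  Finset.singleton_injective <| Finset.eq_of_sum_eq_of_card_add_card_le hc (by simpa using hw)
    (by simpa using hij)

theorem ne_zero_of_sum_smul_eq_zero [Nontrivial K]
    (hc : ∀ f : ι → K, ∑ i, f i • c i = 0 → hammingNorm f ≤ w → f = 0) (hw : 1 ≤ w) (i : ι) :
    c i ≠ 0 := fun hi =>
  Finset.singleton_ne_empty i <| Finset.eq_of_sum_eq_of_card_add_card_le hc (by simpa using hw)
    (by simpa using hi)

theorem linearIndepOn_of_card_le
    (hc : ∀ f : ι → K, ∑ i, f i • c i = 0 → hammingNorm f ≤ w → f = 0) {s : Finset ι}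
    (hs : s.card ≤ w) : LinearIndepOn K c (s : Set ι) := by
  rw [linearIndepOn_iff]
  intro l hl hl0
  rw [Finsupp.linearCombination_apply, Finsupp.sum_fintype _ _ (by simp)] at hl0
  refine DFunLike.coe_injective <|
    hc l hl0 ((hammingNorm_le_card_of_eq_zero s fun i hi => ?_).trans hs)
  exact Finsupp.notMem_support_iff.1 fun h => hi ((Finsupp.mem_supported K l).1 hl h)

theorem isShSet_insert_zero_range [Nontrivial K] {h : ℕ} (hinj : Function.Injective c)
    (h0 : 0 ∉ Set.range c)
    (hc : ∀ f : ι → K, ∑ i, f i • c i = 0 → hammingNorm f ≤ 2 * h → f = 0) :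
    IsShSet (insert 0 (Set.range c)) h := by
  classical
  let e : ι ↪ M := ⟨c, hinj⟩
  have herase (A : Finset M) (hA : ↑A ⊆ insert 0 (Set.range c)) :
      A.erase 0 = (Finset.univ.filter (c · ∈ A)).map e :=
    Finset.erase_eq_map_filter_mem h0 hA
  have hsum_eq (A : Finset M) (hA : ↑A ⊆ insert 0 (Set.range c)) :
      ∑ x ∈ A, x = ∑ i ∈ Finset.univ.filter (c · ∈ A), c i := by
    rw [← Finset.sum_erase A rfl, herase A hA, Finset.sum_map]
    rfl
  have hcard_le (A : Finset M) (hA : ↑A ⊆ insert 0 (Set.range c)) :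
      (Finset.univ.filter (c · ∈ A)).card ≤ A.card := by
    rw [← Finset.card_map e, ← herase A hA]
    exact Finset.card_erase_le
  refine isShSet_of_finset fun A B hA hB hAh hBh hAB => ?_
  have hfilter := Finset.eq_of_sum_eq_of_card_add_card_le hc
    (I := Finset.univ.filter (c · ∈ A)) (J := Finset.univ.filter (c · ∈ B))
    (by have := hcard_le A hA; have := hcard_le B hB; omega)
    (by rw [← hsum_eq A hA, ← hsum_eq B hB, hAB])
  refine Finset.eq_of_erase_eq_of_card_eq (a := 0) ?_ (hAh.trans hBh.symm)
  rw [herase A hA, herase B hB, hfilter]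

end ParityCheck

theorem stmt_15_general {F : Type*} [Field F] [DecidableEq F] {n k r d h : ℕ}
    (hh : 1 ≤ h) (hrk : r + k = n)
    (C : Submodule F (Fin n → F)) (hk : Module.finrank F C = k)
    (hmin : ∀ x ∈ C, x ≠ 0 → d ≤ hammingNorm x)
    (hex : ∃ x ∈ C, x ≠ 0 ∧ hammingNorm x = d)
    (hd : 2 * h + 1 ≤ d) :
    (∃ S : Set (Fin r → F), IsShSet S h ∧ S.ncard = n + 1) ∧ 2 * h ≤ r := by
  obtain ⟨c, hcC⟩ :=
    C.exists_sum_smul_eq_zero_iff_mem (r := r) (by rw [hk, Fintype.card_fin]; omega)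
  have hc : ∀ f : Fin n → F, ∑ i, f i • c i = 0 → hammingNorm f ≤ 2 * h → f = 0 :=
    fun f hf hwt => by_contra fun hf0 => by have := hmin f ((hcC f).1 hf) hf0; omega
  have hinj := injective_of_sum_smul_eq_zero hc (by omega)
  have h0 : 0 ∉ Set.range c := fun ⟨i, hi⟩ => ne_zero_of_sum_smul_eq_zero hc (by omega) i hi
  have hdn : d ≤ n := by
    obtain ⟨x, -, -, hx⟩ := hex
    simpa [hx] using hammingNorm_le_card_fintype (x := x)
  obtain ⟨s, -, hs⟩ := (Finset.univ : Finset (Fin n)).exists_subset_card_eq (n := 2 * h)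
    (by rw [Finset.card_univ, Fintype.card_fin]; omega)
  refine ⟨⟨insert 0 (Set.range c), isShSet_insert_zero_range hinj h0 hc, ?_⟩, ?_⟩
  · rw [Set.ncard_insert_of_notMem h0, Set.ncard_range_of_injective hinj, Nat.card_eq_fintype_card,
      Fintype.card_fin]
  · simpa [hs] using (linearIndepOn_of_card_le hc hs.le).fintype_card_le_finrank

theorem stmt_15 {F : Type*} [Field F] [Fintype F] [DecidableEq F] {n k r d h : ℕ}
    (hh : 1 ≤ h) (hrk : r + k = n)
    (C : Submodule F (Fin n → F)) (hk : Module.finrank F C = k)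
    (hmin : ∀ x ∈ C, x ≠ 0 → d ≤ hammingNorm x)
    (hex : ∃ x ∈ C, x ≠ 0 ∧ hammingNorm x = d)
    (hd : 2 * h + 1 ≤ d) :
    (∃ S : Set (Fin r → F), IsShSet S h ∧ S.ncard = n + 1) ∧ 2 * h ≤ r :=
  stmt_15_general hh hrk C hk hmin hex hd
end
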